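/- Let K = 2^m for a natural number m ≥ 1. Then: (i) there exist constants C > 0 and δ > 0 such that for every a ∈ ℝ^{K−1} with a_i > 0 for all i and ‖a‖₁ ≤ δ, and every index i, |a_i b_i(a)/D(a) − a_i(1 − a_i)| ≤ C·‖a‖₁³; that is, to linear order in ‖a‖₁ the reduced cross-entropy dynamics decouple into da_i/dt = a_i(1 − a_i) + O(‖a‖₁³). (ii) For any a₀ ∈ (0, 1), the function a(t) = a₀ / (a₀ + (1 − a₀)e^{−t}) solves the logistic equation a' = a(1 − a) with a(0) = a₀. -/

import Mathlib

open Matrix Finset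

noncomputable section

/-- The Sylvester Hadamard matrix `Φ_{2^m}`, defined recursively by `Φ₁ = (1)` and
`Φ_{2^{m+1}} = [[Φ_{2^m}, Φ_{2^m}], [Φ_{2^m}, -Φ_{2^m}]]`. -/
def sylvester : (m : ℕ) → Matrix (Fin (2 ^ m)) (Fin (2 ^ m)) ℝ
  | 0 => Matrix.of fun _ _ => 1
  | m + 1 => Matrix.of fun i j =>
      (if 2 ^ m ≤ i.val ∧ 2 ^ m ≤ j.val then -1 else 1) *
        sylvester m ⟨i.val % 2 ^ m, Nat.mod_lt _ (Nat.two_pow_pos m)⟩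
          ⟨j.val % 2 ^ m, Nat.mod_lt _ (Nat.two_pow_pos m)⟩

/-- The core `X = Φ[2:K, 2:K]` obtained by deleting the first row and column of `Φ`. -/
def hadCore (m : ℕ) : Matrix (Fin (2 ^ m - 1)) (Fin (2 ^ m - 1)) ℝ :=
  Matrix.of fun i j =>
    sylvester m ⟨i.val + 1, by have h1 := Nat.two_pow_pos m; have h2 := i.isLt; omega⟩
      ⟨j.val + 1, by have h1 := Nat.two_pow_pos m; have h2 := j.isLt; omega⟩

/-- `Ψ = 1 1ᵀ − X`. -/
def PsiM (m : ℕ) : Matrix (Fin (2 ^ m - 1)) (Fin (2 ^ m - 1)) ℝ :=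
  Matrix.of fun i j => 1 - hadCore m i j

/-- `b_i(a) = Σ_j Ψ_{ij} exp(−(Ψa)_j)`. -/
def bVec (m : ℕ) (a : Fin (2 ^ m - 1) → ℝ) (i : Fin (2 ^ m - 1)) : ℝ :=
  ∑ j, PsiM m i j * Real.exp (-((PsiM m).mulVec a j))

/-- `D(a) = 1 + Σ_j exp(−(Ψa)_j)`. -/
def Dden (m : ℕ) (a : Fin (2 ^ m - 1) → ℝ) : ℝ :=
  1 + ∑ j, Real.exp (-((PsiM m).mulVec a j))

/-- The energy `E(a) = log(1 + Σ_j exp(−(Ψa)_j))`. -/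
def energyE (m : ℕ) (a : Fin (2 ^ m - 1) → ℝ) : ℝ :=
  Real.log (1 + ∑ j, Real.exp (-((PsiM m).mulVec a j)))

/-- `b̄(a) = Σ_j â_j b_j(a)` with `â = a / ‖a‖₁`. -/
def bbar (m : ℕ) (a : Fin (2 ^ m - 1) → ℝ) : ℝ :=
  ∑ j, (a j / ∑ k, a k) * bVec m a j

/-- `M(a) = (1/2) Σ_i (â_i − 1/(K−1))²`. -/
def Mmetric (m : ℕ) (a : Fin (2 ^ m - 1) → ℝ) : ℝ :=
  (1 / 2) * ∑ i, (a i / (∑ k, a k) - 1 / ((2 : ℝ) ^ m - 1)) ^ 2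

/-!
`Φ_{2^m}` is the `m`-th Kronecker power of `!![1, 1; 1, -1]`, hence a symmetric Hadamard matrix
with first row and column all ones. Consequently `Ψ = 1 1ᵀ - X` has entries in `{0, 2}`, row sums
`K` and `Ψ² = K (1 1ᵀ + 1)`. Put `y = Ψ a`, so `0 ≤ y ≤ 2 ‖a‖₁`, and expand
`exp (-y) = 1 - y + O(y²)` in `b_i - (1 - a_i) D`: by these identities the zeroth and first order
terms collapse to `-K a_i ‖a‖₁`, and the remainder is `O(K ‖a‖₁²)`. As `D ≥ 1`, multiplying by
`a_i / D` gives the cubic bound. Part (ii) is a direct computation of the derivative.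
-/

open scoped Kronecker

def hadamardTwo : Matrix (Fin 2) (Fin 2) ℝ := !![1, 1; 1, -1]

/-- `(a, b) ↦ 2 ^ m * a + b`: the block decomposition of the indices of `sylvester (m + 1)`. -/
def sylvesterEquiv (m : ℕ) : Fin 2 × Fin (2 ^ m) ≃ Fin (2 ^ (m + 1)) :=
  finProdFinEquiv.trans (finCongr (by ring))

lemma sylvester_succ_sylvesterEquiv (m : ℕ) (x y : Fin 2 × Fin (2 ^ m)) :
    sylvester (m + 1) (sylvesterEquiv m x) (sylvesterEquiv m y) =
      hadamardTwo x.1 y.1 * sylvester m x.2 y.2 := by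
  obtain ⟨a, b⟩ := x
  obtain ⟨c, d⟩ := y
  have hmod (k : Fin (2 ^ m)) (l : ℕ) : (k.val + 2 ^ m * l) % 2 ^ m = k.val := by
    rw [Nat.add_mul_mod_self_left, Nat.mod_eq_of_lt k.isLt]
  simp only [sylvester, sylvesterEquiv, Equiv.trans_apply, finProdFinEquiv_apply_val,
    finCongr_apply, Fin.val_cast, of_apply, hmod]
  fin_cases a <;> fin_cases c <;> simp [hadamardTwo]

lemma sylvester_succ_eq_reindex (m : ℕ) :
    sylvester (m + 1) =
      reindex (sylvesterEquiv m) (sylvesterEquiv m) (hadamardTwo ⊗ₖ sylvester m) := by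
  ext i j
  obtain ⟨x, rfl⟩ := (sylvesterEquiv m).surjective i
  obtain ⟨y, rfl⟩ := (sylvesterEquiv m).surjective j
  simp [sylvester_succ_sylvesterEquiv, kroneckerMap_apply]

lemma abs_sylvester (m : ℕ) (i j : Fin (2 ^ m)) : |sylvester m i j| = 1 := by
  induction m with
  | zero => simp [sylvester]
  | succ m ih =>
    obtain ⟨⟨a, b⟩, rfl⟩ := (sylvesterEquiv m).surjective i
    obtain ⟨⟨c, d⟩, rfl⟩ := (sylvesterEquiv m).surjective j
    rw [sylvester_succ_sylvesterEquiv, abs_mul, ih, mul_one]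
    fin_cases a <;> fin_cases c <;> simp [hadamardTwo]

lemma transpose_sylvester (m : ℕ) : (sylvester m)ᵀ = sylvester m := by
  induction m with
  | zero => rfl
  | succ m ih =>
    have hH : hadamardTwoᵀ = hadamardTwo := by
      ext i j; fin_cases i <;> fin_cases j <;> rfl
    rw [sylvester_succ_eq_reindex, transpose_reindex, ← kroneckerMap_transpose, hH, ih]

lemma sylvester_zero_left (m : ℕ) (j : Fin (2 ^ m)) : sylvester m 0 j = 1 := by
  induction m with
  | zero => rfl
  | succ m ih =>
    rw [sylvester, of_apply, if_neg (by simp), one_mul]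
    convert ih _
    simp

lemma hadamardTwo_mul_transpose : hadamardTwo * hadamardTwoᵀ = (2 : ℝ) • 1 := by
  ext i j
  fin_cases i <;> fin_cases j <;> simp [hadamardTwo, Matrix.mul_apply] <;> norm_num

lemma sylvester_mul_transpose (m : ℕ) : sylvester m * (sylvester m)ᵀ = (2 ^ m : ℝ) • 1 := by
  induction m with
  | zero =>
    ext i j
    obtain rfl : i = j := Fin.ext (by omega)
    simp [sylvester, Matrix.mul_apply]
  | succ m ih =>
    rw [sylvester_succ_eq_reindex, transpose_reindex, ← kroneckerMap_transpose, reindex_apply,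
      reindex_apply, submatrix_mul_equiv, ← mul_kronecker_mul, hadamardTwo_mul_transpose, ih,
      smul_kronecker, kronecker_smul, one_kronecker_one, smul_smul, ← pow_succ', submatrix_smul,
      Pi.smul_apply, Pi.smul_apply, submatrix_one_equiv]

structure IsNormalizedSymmHadamard {n : ℕ} (H : Matrix (Fin (n + 1)) (Fin (n + 1)) ℝ) : Prop where
  abs_apply : ∀ i j, |H i j| = 1
  transpose_eq : Hᵀ = H
  zero_left : ∀ j, H 0 j = 1
  mul_transpose : H * Hᵀ = ((n : ℝ) + 1) • 1

namespace IsNormalizedSymmHadamard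

variable {n : ℕ} {H : Matrix (Fin (n + 1)) (Fin (n + 1)) ℝ}

lemma apply_comm (hH : IsNormalizedSymmHadamard H) (i j : Fin (n + 1)) : H i j = H j i :=
  congrFun (congrFun hH.transpose_eq j) i

lemma sum_succ_mul_succ (hH : IsNormalizedSymmHadamard H) (i j : Fin n) :
    ∑ k : Fin n, H i.succ k.succ * H j.succ k.succ = (n + 1) * (if i = j then 1 else 0) - 1 := by
  have h := congrFun (congrFun hH.mul_transpose i.succ) j.succ
  rw [Matrix.mul_apply, Fin.sum_univ_succ] at h
  simp only [transpose_apply, hH.apply_comm _ 0, hH.zero_left, one_mul, Matrix.smul_apply,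
    one_apply, Fin.succ_inj, smul_eq_mul] at h
  linarith

lemma sum_succ (hH : IsNormalizedSymmHadamard H) (i : Fin n) :
    ∑ k : Fin n, H i.succ k.succ = -1 := by
  have h := congrFun (congrFun hH.mul_transpose i.succ) 0
  rw [Matrix.mul_apply, Fin.sum_univ_succ] at h
  simp only [transpose_apply, hH.apply_comm _ 0, hH.zero_left, mul_one, Matrix.smul_apply,
    one_apply, Fin.succ_ne_zero, if_false, smul_zero] at h
  linarith

lemma sum_one_sub_succ (hH : IsNormalizedSymmHadamard H) (i : Fin n) :
    ∑ j : Fin n, (1 - H i.succ j.succ) = n + 1 := by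
  rw [Finset.sum_sub_distrib, hH.sum_succ]
  simp

lemma sum_one_sub_succ_mul_one_sub_succ (hH : IsNormalizedSymmHadamard H) (i j : Fin n) :
    ∑ k : Fin n, (1 - H i.succ k.succ) * (1 - H k.succ j.succ) =
      (n + 1) * (1 + if i = j then 1 else 0) := by
  have expand (k : Fin n) : (1 - H i.succ k.succ) * (1 - H k.succ j.succ) =
      1 - H i.succ k.succ - H j.succ k.succ + H i.succ k.succ * H j.succ k.succ := by
    rw [hH.apply_comm k.succ]; ring
  simp only [expand, Finset.sum_add_distrib, Finset.sum_sub_distrib, hH.sum_succ,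
    hH.sum_succ_mul_succ, sum_const, card_univ, Fintype.card_fin, nsmul_eq_mul, mul_one]
  ring

end IsNormalizedSymmHadamard

/-- `sylvester m` indexed by `Fin (2 ^ m - 1 + 1)`, so that `hadCore m` is its `Fin.succ` minor. -/
def sylvesterSucc (m : ℕ) : Matrix (Fin (2 ^ m - 1 + 1)) (Fin (2 ^ m - 1 + 1)) ℝ :=
  reindex (finCongr (Nat.sub_add_cancel Nat.one_le_two_pow).symm)
    (finCongr (Nat.sub_add_cancel Nat.one_le_two_pow).symm) (sylvester m)

lemma isNormalizedSymmHadamard_sylvesterSucc (m : ℕ) :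
    IsNormalizedSymmHadamard (sylvesterSucc m) where
  abs_apply _ _ := abs_sylvester m _ _
  transpose_eq := by rw [sylvesterSucc, transpose_reindex, transpose_sylvester]
  zero_left _ := sylvester_zero_left m _
  mul_transpose := by
    have hK : ((2 ^ m - 1 : ℕ) : ℝ) + 1 = 2 ^ m := by
      exact_mod_cast Nat.sub_add_cancel Nat.one_le_two_pow
    rw [sylvesterSucc, transpose_reindex, reindex_apply, reindex_apply, submatrix_mul_equiv,
      sylvester_mul_transpose, hK, submatrix_smul, Pi.smul_apply, Pi.smul_apply,
      submatrix_one_equiv]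

lemma PsiM_apply (m : ℕ) (i j : Fin (2 ^ m - 1)) :
    PsiM m i j = 1 - sylvesterSucc m i.succ j.succ := rfl

lemma PsiM_nonneg (m : ℕ) (i j : Fin (2 ^ m - 1)) : 0 ≤ PsiM m i j := by
  have := (isNormalizedSymmHadamard_sylvesterSucc m).abs_apply i.succ j.succ
  rw [PsiM_apply]; linarith [le_abs_self (sylvesterSucc m i.succ j.succ)]

lemma PsiM_le_two (m : ℕ) (i j : Fin (2 ^ m - 1)) : PsiM m i j ≤ 2 := by
  have := (isNormalizedSymmHadamard_sylvesterSucc m).abs_apply i.succ j.succ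
  rw [PsiM_apply]; linarith [neg_abs_le (sylvesterSucc m i.succ j.succ)]

lemma PsiM_comm (m : ℕ) (i j : Fin (2 ^ m - 1)) : PsiM m i j = PsiM m j i := by
  rw [PsiM_apply, PsiM_apply, (isNormalizedSymmHadamard_sylvesterSucc m).apply_comm]

lemma sum_PsiM (m : ℕ) (i : Fin (2 ^ m - 1)) : ∑ j, PsiM m i j = 2 ^ m := by
  simp only [PsiM_apply, (isNormalizedSymmHadamard_sylvesterSucc m).sum_one_sub_succ]
  exact_mod_cast Nat.sub_add_cancel Nat.one_le_two_pow

lemma sum_PsiM_mul_PsiM (m : ℕ) (i j : Fin (2 ^ m - 1)) :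
    ∑ k, PsiM m i k * PsiM m k j = 2 ^ m * (1 + if i = j then 1 else 0) := by
  simp only [PsiM_apply,
    (isNormalizedSymmHadamard_sylvesterSucc m).sum_one_sub_succ_mul_one_sub_succ]
  congr 1
  exact_mod_cast Nat.sub_add_cancel Nat.one_le_two_pow

lemma abs_sum_mul_exp_neg_sub_le {ι : Type*} [Fintype ι] (w y : ι → ℝ) (hy : ∀ j, |y j| ≤ 1) :
    |∑ j, w j * Real.exp (-y j) - ∑ j, w j * (1 - y j)| ≤ ∑ j, |w j| * y j ^ 2 := by
  rw [← Finset.sum_sub_distrib]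
  refine (Finset.abs_sum_le_sum_abs _ _).trans (Finset.sum_le_sum fun j _ => ?_)
  have h := Real.abs_exp_sub_one_sub_id_le (x := -y j) (by rw [abs_neg]; exact hy j)
  rw [neg_sq] at h
  rw [← mul_sub, abs_mul]
  refine mul_le_mul_of_nonneg_left ?_ (abs_nonneg _)
  have e : Real.exp (-y j) - (1 - y j) = Real.exp (-y j) - 1 - -y j := by ring
  rwa [e]

section Linearization

variable (m : ℕ) (a : Fin (2 ^ m - 1) → ℝ)

lemma sum_PsiM_mulVec : ∑ j, (PsiM m *ᵥ a) j = 2 ^ m * ∑ j, a j := by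
  simp only [mulVec, dotProduct]
  rw [Finset.sum_comm, Finset.mul_sum]
  refine Finset.sum_congr rfl fun k _ => ?_
  simp only [← Finset.sum_mul, PsiM_comm m _ k, sum_PsiM]

lemma sum_PsiM_mul_PsiM_mulVec (i : Fin (2 ^ m - 1)) :
    ∑ j, PsiM m i j * (PsiM m *ᵥ a) j = 2 ^ m * (∑ j, a j + a i) := by
  have h : ∑ j, PsiM m i j * (PsiM m *ᵥ a) j = ((PsiM m * PsiM m) *ᵥ a) i := by
    rw [← mulVec_mulVec]; rfl
  rw [h]
  simp only [mulVec, dotProduct, Matrix.mul_apply, sum_PsiM_mul_PsiM, mul_add, add_mul, mul_one,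
    Finset.sum_add_distrib, mul_ite, mul_zero, ite_mul, zero_mul, Finset.sum_ite_eq, Finset.mem_univ,
    if_true]
  rw [Finset.mul_sum]

variable {m a}

lemma PsiM_mulVec_nonneg (ha : ∀ j, 0 ≤ a j) (j : Fin (2 ^ m - 1)) : 0 ≤ (PsiM m *ᵥ a) j := by
  simp only [mulVec, dotProduct]
  exact Finset.sum_nonneg fun k _ => mul_nonneg (PsiM_nonneg m j k) (ha k)

lemma PsiM_mulVec_le (ha : ∀ j, 0 ≤ a j) (j : Fin (2 ^ m - 1)) :
    (PsiM m *ᵥ a) j ≤ 2 * ∑ k, a k := by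
  simp only [mulVec, dotProduct, Finset.mul_sum]
  exact Finset.sum_le_sum fun k _ => mul_le_mul_of_nonneg_right (PsiM_le_two m j k) (ha k)

lemma sum_sq_PsiM_mulVec_le (ha : ∀ j, 0 ≤ a j) :
    ∑ j, (PsiM m *ᵥ a) j ^ 2 ≤ 2 * 2 ^ m * (∑ j, a j) ^ 2 :=
  calc ∑ j, (PsiM m *ᵥ a) j ^ 2 ≤ ∑ j, 2 * (∑ k, a k) * (PsiM m *ᵥ a) j :=
        Finset.sum_le_sum fun j _ => by
          rw [sq]; exact mul_le_mul_of_nonneg_right (PsiM_mulVec_le ha j) (PsiM_mulVec_nonneg ha j)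
    _ = 2 * 2 ^ m * (∑ j, a j) ^ 2 := by rw [← Finset.mul_sum, sum_PsiM_mulVec]; ring

lemma one_le_Dden : 1 ≤ Dden m a :=
  le_add_of_nonneg_right (Finset.sum_nonneg fun _ _ => (Real.exp_pos _).le)

lemma bVec_sub_mul_Dden (c : ℝ) (i : Fin (2 ^ m - 1)) :
    bVec m a i - c * Dden m a = ∑ j, (PsiM m i j - c) * Real.exp (-(PsiM m *ᵥ a) j) - c := by
  simp only [bVec, Dden, sub_mul, Finset.sum_sub_distrib, mul_add, Finset.mul_sum]
  ring

/-- The zeroth and first order part of `bVec m a i - (1 - a i) * Dden m a`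
(see `bVec_sub_mul_Dden`, with `exp (-y)` replaced by `1 - y`). -/
lemma sum_PsiM_sub_mul_one_sub_PsiM_mulVec (i : Fin (2 ^ m - 1)) :
    ∑ j, (PsiM m i j - (1 - a i)) * (1 - (PsiM m *ᵥ a) j) - (1 - a i) =
      -(2 ^ m * a i * ∑ j, a j) := by
  have hcard : ((2 ^ m - 1 : ℕ) : ℝ) = 2 ^ m - 1 := by
    rw [Nat.cast_sub Nat.one_le_two_pow]; simp
  simp only [mul_sub, sub_mul, mul_one, one_mul, Finset.sum_sub_distrib, ← Finset.mul_sum,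
    sum_PsiM, sum_PsiM_mul_PsiM_mulVec, sum_PsiM_mulVec, sum_const, card_univ, Fintype.card_fin,
    nsmul_eq_mul, hcard]
  ring

lemma abs_bVec_sub_mul_Dden_le (ha : ∀ j, 0 ≤ a j) (hs : ∑ j, a j ≤ 1 / 2) (i : Fin (2 ^ m - 1)) :
    |bVec m a i - (1 - a i) * Dden m a| ≤ 5 * 2 ^ m * (∑ j, a j) ^ 2 := by
  set s := ∑ j, a j
  have hai : a i ≤ s := Finset.single_le_sum (fun j _ => ha j) (Finset.mem_univ i)
  have hy (j : Fin (2 ^ m - 1)) : |(PsiM m *ᵥ a) j| ≤ 1 := by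
    rw [abs_of_nonneg (PsiM_mulVec_nonneg ha j)]; linarith [PsiM_mulVec_le ha j]
  have hw (j : Fin (2 ^ m - 1)) : |PsiM m i j - (1 - a i)| ≤ 2 := by
    rw [abs_le]; constructor <;> linarith [PsiM_nonneg m i j, PsiM_le_two m i j, ha i]
  have herr := abs_sum_mul_exp_neg_sub_le (fun j => PsiM m i j - (1 - a i)) _ hy
  have hquad : ∑ j, |PsiM m i j - (1 - a i)| * (PsiM m *ᵥ a) j ^ 2 ≤ 4 * 2 ^ m * s ^ 2 :=
    calc _ ≤ ∑ j, 2 * (PsiM m *ᵥ a) j ^ 2 :=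
          Finset.sum_le_sum fun j _ => mul_le_mul_of_nonneg_right (hw j) (sq_nonneg _)
      _ ≤ 4 * 2 ^ m * s ^ 2 := by rw [← Finset.mul_sum]; linarith [sum_sq_PsiM_mulVec_le ha]
  have hlin : |-(2 ^ m * a i * s)| ≤ 2 ^ m * s ^ 2 := by
    have hs0 : 0 ≤ s := Finset.sum_nonneg fun j _ => ha j
    rw [abs_neg, abs_of_nonneg (mul_nonneg (mul_nonneg (by positivity) (ha i)) hs0), sq, ← mul_assoc]
    exact mul_le_mul_of_nonneg_right (mul_le_mul_of_nonneg_left hai (by positivity)) hs0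
  calc |bVec m a i - (1 - a i) * Dden m a|
      = |(∑ j, (PsiM m i j - (1 - a i)) * Real.exp (-(PsiM m *ᵥ a) j) -
            ∑ j, (PsiM m i j - (1 - a i)) * (1 - (PsiM m *ᵥ a) j)) +
          (∑ j, (PsiM m i j - (1 - a i)) * (1 - (PsiM m *ᵥ a) j) - (1 - a i))| := by
        rw [bVec_sub_mul_Dden, sub_add_sub_cancel]
    _ ≤ 4 * 2 ^ m * s ^ 2 + 2 ^ m * s ^ 2 := by
        rw [sum_PsiM_sub_mul_one_sub_PsiM_mulVec]
        exact (abs_add_le _ _).trans (add_le_add (herr.trans hquad) hlin)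
    _ = 5 * 2 ^ m * s ^ 2 := by ring

end Linearization

lemma abs_mul_bVec_div_Dden_sub_le {m : ℕ} {a : Fin (2 ^ m - 1) → ℝ} (ha : ∀ j, 0 ≤ a j)
    (hs : ∑ j, a j ≤ 1 / 2) (i : Fin (2 ^ m - 1)) :
    |a i * bVec m a i / Dden m a - a i * (1 - a i)| ≤ 5 * 2 ^ m * (∑ j, a j) ^ 3 := by
  have hD : 1 ≤ Dden m a := one_le_Dden
  have hai : a i ≤ ∑ j, a j := Finset.single_le_sum (fun j _ => ha j) (Finset.mem_univ i)
  have h : a i * bVec m a i / Dden m a - a i * (1 - a i) =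
      a i * (bVec m a i - (1 - a i) * Dden m a) / Dden m a := by
    field_simp
  rw [h, abs_div, abs_mul, abs_of_nonneg (ha i), abs_of_pos (show 0 < Dden m a by linarith)]
  calc a i * |bVec m a i - (1 - a i) * Dden m a| / Dden m a
      ≤ a i * |bVec m a i - (1 - a i) * Dden m a| :=
        div_le_self (mul_nonneg (ha i) (abs_nonneg _)) hD
    _ ≤ (∑ j, a j) * (5 * 2 ^ m * (∑ j, a j) ^ 2) :=
        mul_le_mul hai (abs_bVec_sub_mul_Dden_le ha hs i) (abs_nonneg _) ((ha i).trans hai)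
    _ = 5 * 2 ^ m * (∑ j, a j) ^ 3 := by ring

lemma hasDerivAt_logistic {a₀ : ℝ} (h0 : 0 ≤ a₀) (h1 : a₀ ≤ 1) (t : ℝ) :
    HasDerivAt (fun s => a₀ / (a₀ + (1 - a₀) * Real.exp (-s)))
      ((a₀ / (a₀ + (1 - a₀) * Real.exp (-t))) *
        (1 - a₀ / (a₀ + (1 - a₀) * Real.exp (-t)))) t := by
  set g := a₀ + (1 - a₀) * Real.exp (-t) with hg_def
  have hg : 0 < g := by
    rcases h0.lt_or_eq with h0 | rfl
    · exact add_pos_of_pos_of_nonneg h0 (mul_nonneg (by linarith) (Real.exp_pos _).le)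
    · simpa [hg_def] using Real.exp_pos (-t)
  -- `g' = a₀ - g`, so `(a₀ / g)' = a₀ (g - a₀) / g ^ 2 = (a₀ / g) (1 - a₀ / g)`.
  have hderiv : HasDerivAt (fun s => a₀ + (1 - a₀) * Real.exp (-s)) (a₀ - g) t := by
    refine (((hasDerivAt_neg t).exp.const_mul (1 - a₀)).const_add a₀).congr_deriv ?_
    rw [hg_def]; ring
  refine ((hasDerivAt_const t a₀).div hderiv hg.ne').congr_deriv ?_
  change (0 * g - a₀ * (a₀ - g)) / g ^ 2 = a₀ / g * (1 - a₀ / g)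
  field_simp
  ring

theorem linearized_dynamics_logistic_general (m : ℕ) :
    (∃ C > (0 : ℝ), ∃ δ > (0 : ℝ),
      ∀ a : Fin (2 ^ m - 1) → ℝ, (∀ i, 0 < a i) → (∑ i, a i) ≤ δ →
        ∀ i, |a i * bVec m a i / Dden m a - a i * (1 - a i)| ≤ C * (∑ i, a i) ^ 3) ∧
    (∀ a₀ : ℝ, 0 < a₀ → a₀ < 1 →
      (∀ t : ℝ, HasDerivAt (fun s => a₀ / (a₀ + (1 - a₀) * Real.exp (-s)))
        ((a₀ / (a₀ + (1 - a₀) * Real.exp (-t))) *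
          (1 - a₀ / (a₀ + (1 - a₀) * Real.exp (-t)))) t) ∧
      a₀ / (a₀ + (1 - a₀) * Real.exp (-(0 : ℝ))) = a₀) :=
  ⟨⟨5 * 2 ^ m, by positivity, 1 / 2, by norm_num, fun _ ha hs i =>
      abs_mul_bVec_div_Dden_sub_le (fun j => (ha j).le) hs i⟩,
    fun _ h0 h1 => ⟨hasDerivAt_logistic h0.le h1.le, by simp⟩⟩

/-- linearized dynamics decouple into logistic equations.
(i) There are constants `C > 0`, `δ > 0` such that for every positive `a` with
`‖a‖₁ ≤ δ` and every `i`, `|a_i b_i(a)/D(a) − a_i(1 − a_i)| ≤ C‖a‖₁³`; i.e. to linear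
order the reduced cross-entropy dynamics are `da_i/dt = a_i(1 − a_i) + O(‖a‖₁³)`.
(ii) For `a₀ ∈ (0,1)`, `a(t) = a₀/(a₀ + (1 − a₀)e^{−t})` solves the logistic equation
`a' = a(1 − a)` with `a(0) = a₀`. -/
theorem linearized_dynamics_logistic (m : ℕ) (hm : 1 ≤ m) :
    (∃ C > (0 : ℝ), ∃ δ > (0 : ℝ),
      ∀ a : Fin (2 ^ m - 1) → ℝ, (∀ i, 0 < a i) → (∑ i, a i) ≤ δ →
        ∀ i, |a i * bVec m a i / Dden m a - a i * (1 - a i)| ≤ C * (∑ i, a i) ^ 3) ∧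
    (∀ a₀ : ℝ, 0 < a₀ → a₀ < 1 →
      (∀ t : ℝ, HasDerivAt (fun s => a₀ / (a₀ + (1 - a₀) * Real.exp (-s)))
        ((a₀ / (a₀ + (1 - a₀) * Real.exp (-t))) *
          (1 - a₀ / (a₀ + (1 - a₀) * Real.exp (-t)))) t) ∧
      a₀ / (a₀ + (1 - a₀) * Real.exp (-(0 : ℝ))) = a₀) :=
  linearized_dynamics_logistic_general m
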